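/- arXiv:2407.06652 — 2 statements merged into one kernel-verified Lean document; each statement's English description precedes it below -/
import Mathlib

section
/- Let k ≥ 3 and let n be a positive integer with gcd(n, 2) = 1. Then the domination number of the proper enhanced power graph of G = Z_n × Q_{2^k} satisfies γ(G_E**(Z_n × Q_{2^k})) = 2^{k-2} + 1. -/
open SimpleGraph

/-- The enhanced power graph of a group `G`: distinct `x, y` are adjacent iff
both lie in a common cyclic subgroup `⟨w⟩`. -/
def enhancedPowerGraph (G : Type*) [Group G] : SimpleGraph G where
  Adj x y := x ≠ y ∧ ∃ w : G, x ∈ Subgroup.zpowers w ∧ y ∈ Subgroup.zpowers w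
  symm := by
    constructor
    rintro x y ⟨hxy, w, hx, hy⟩
    exact ⟨hxy.symm, w, hy, hx⟩
  loopless := by
    constructor
    rintro x ⟨hxx, -⟩
    exact hxx rfl

/-- The set of dominating vertices of a graph: vertices adjacent to every other vertex. -/
def SimpleGraph.domVerts {V : Type*} (Γ : SimpleGraph V) : Set V :=
  {v | ∀ u, u ≠ v → Γ.Adj v u}

/-- The proper enhanced power graph: the enhanced power graph induced on the complement of
its set of dominating vertices. -/
def properEnhancedPowerGraph (G : Type*) [Group G] :
    SimpleGraph ((enhancedPowerGraph G).domVertsᶜ : Set G) :=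
  SimpleGraph.induce ((enhancedPowerGraph G).domVertsᶜ) (enhancedPowerGraph G)

/-- A total (strongly) dominating set: every vertex has a neighbor in `D`. -/
def SimpleGraph.IsTotalDominatingSet {V : Type*} (Γ : SimpleGraph V) (D : Set V) : Prop :=
  ∀ v : V, ∃ u ∈ D, Γ.Adj v u

/-- The strong domination number: minimum size of a total dominating set. -/
noncomputable def SimpleGraph.strongDominationNumber {V : Type*} (Γ : SimpleGraph V) : ℕ :=
  sInf {n : ℕ | ∃ D : Set V, Γ.IsTotalDominatingSet D ∧ D.ncard = n}

/-- A dominating set: every vertex not in `D` has a neighbor in `D`. -/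
def SimpleGraph.IsDominatingSet {V : Type*} (Γ : SimpleGraph V) (D : Set V) : Prop :=
  ∀ v ∉ D, ∃ u ∈ D, Γ.Adj v u

/-- The domination number: minimum size of a dominating set. -/
noncomputable def SimpleGraph.dominationNumber {V : Type*} (Γ : SimpleGraph V) : ℕ :=
  sInf {n : ℕ | ∃ D : Set V, Γ.IsDominatingSet D ∧ D.ncard = n}

/-- `G` is a generalized quaternion group `Q_{2^k}` for some `k ≥ 3`. -/
def IsGeneralizedQuaternion (G : Type*) [Group G] : Prop :=
  ∃ k : ℕ, 3 ≤ k ∧ Nonempty (G ≃* QuaternionGroup (2 ^ (k - 2)))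

/-- The number of subgroups of `G` of order `p`. -/
noncomputable def numSubgroupsOfOrder (G : Type*) [Group G] (p : ℕ) : ℕ :=
  Nat.card {H : Subgroup G // Nat.card H = p}

/-! Since `n` is odd, two elements of `Z_n × Q_{2^k}` lie in a common cyclic subgroup iff their
`Q_{2^k}`-components do. Put `m = 2^{k-2}`. Every maximal cyclic subgroup of `Q_{2^k}`, namely
`⟨a 1⟩` or `⟨xa j⟩ = ⟨xa (j + m)⟩`, contains the centre `{1, a m}`, and any two of them meet only
there. So the dominating vertices are the elements with central `Q_{2^k}`-component, and the
proper enhanced power graph is a disjoint union of `m + 1` cliques, one per maximal cyclic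
subgroup; a dominating set must meet each clique, and one vertex per clique suffices. -/

open Subgroup

theorem SimpleGraph.dominationNumber_eq_of_adj_iff {V ι : Type*} [Finite V] (Γ : SimpleGraph V)
    (π : V → ι) (hπ : Function.Surjective π) (hadj : ∀ u v, Γ.Adj u v ↔ u ≠ v ∧ π u = π v) :
    Γ.dominationNumber = Nat.card ι := by
  have hfiber : ∀ D, Γ.IsDominatingSet D → π '' D = Set.univ := by
    refine fun D hD => Set.eq_univ_of_forall fun i => ?_
    obtain ⟨v, rfl⟩ := hπ i
    by_cases hv : v ∈ D
    · exact ⟨v, hv, rfl⟩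
    · obtain ⟨u, hu, huv⟩ := hD v hv
      exact ⟨u, hu, ((hadj v u).mp huv).2.symm⟩
  have hsection : Γ.IsDominatingSet (Set.range (Function.surjInv hπ)) := by
    intro v hv
    refine ⟨_, ⟨π v, rfl⟩, (hadj _ _).mpr ⟨?_, (Function.surjInv_eq hπ _).symm⟩⟩
    exact fun h => hv ⟨π v, h.symm⟩
  have hcard : (Set.range (Function.surjInv hπ)).ncard = Nat.card ι :=
    Set.ncard_range_of_injective (Function.injective_surjInv hπ)
  refine le_antisymm (Nat.sInf_le ⟨_, hsection, hcard⟩) (le_csInf ⟨_, _, hsection, hcard⟩ ?_)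
  rintro _ ⟨D, hD, rfl⟩
  calc Nat.card ι = (π '' D).ncard := by rw [hfiber D hD, Set.ncard_univ]
    _ ≤ D.ncard := Set.ncard_image_le (Set.toFinite D)

def InCommonCyclic {G : Type*} [Group G] (x y : G) : Prop :=
  ∃ w : G, x ∈ zpowers w ∧ y ∈ zpowers w

theorem InCommonCyclic.symm {G : Type*} [Group G] {x y : G} (h : InCommonCyclic x y) :
    InCommonCyclic y x :=
  let ⟨w, hx, hy⟩ := h
  ⟨w, hy, hx⟩

theorem enhancedPowerGraph_adj_iff {G : Type*} [Group G] {x y : G} :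
    (enhancedPowerGraph G).Adj x y ↔ x ≠ y ∧ InCommonCyclic x y :=
  Iff.rfl

theorem mem_domVerts_enhancedPowerGraph_iff {G : Type*} [Group G] {v : G} :
    v ∈ (enhancedPowerGraph G).domVerts ↔ ∀ u, InCommonCyclic v u := by
  refine ⟨fun h u => ?_, fun h u hu => ⟨hu.symm, h u⟩⟩
  obtain rfl | hu := eq_or_ne u v
  · exact ⟨u, mem_zpowers u, mem_zpowers u⟩
  · exact (h u hu).2

theorem InCommonCyclic.map {G H : Type*} [Group G] [Group H] (f : G →* H) {x y : G}
    (h : InCommonCyclic x y) : InCommonCyclic (f x) (f y) := by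
  obtain ⟨w, hx, hy⟩ := h
  exact ⟨f w, f.map_zpowers w ▸ mem_map_of_mem f hx, f.map_zpowers w ▸ mem_map_of_mem f hy⟩

theorem inCommonCyclic_prod_iff {A B : Type*} [Group A] [Group B] [IsCyclic A]
    (hAB : (Nat.card A).Coprime (Nat.card B)) {u v : A × B} :
    InCommonCyclic u v ↔ InCommonCyclic u.2 v.2 := by
  refine ⟨InCommonCyclic.map (MonoidHom.snd A B), fun ⟨s, hu, hv⟩ => ?_⟩
  have : IsCyclic (A × zpowers s) := Group.isCyclic_prod_iff.mpr
    ⟨inferInstance, inferInstance, hAB.coprime_dvd_right (card_subgroup_dvd_card _)⟩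
  obtain ⟨g, hg⟩ := IsCyclic.exists_generator (α := A × zpowers s)
  have hlift := InCommonCyclic.map ((MonoidHom.id A).prodMap (zpowers s).subtype)
    ⟨g, hg (u.1, ⟨u.2, hu⟩), hg (v.1, ⟨v.2, hv⟩)⟩
  simpa using hlift

theorem mem_domVerts_enhancedPowerGraph_prod_iff {A B : Type*} [Group A] [Group B] [IsCyclic A]
    (hAB : (Nat.card A).Coprime (Nat.card B)) {v : A × B} :
    v ∈ (enhancedPowerGraph (A × B)).domVerts ↔ ∀ q, InCommonCyclic v.2 q := by
  simp only [mem_domVerts_enhancedPowerGraph_iff, inCommonCyclic_prod_iff hAB]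
  exact ⟨fun h q => h (1, q), fun h u => h u.2⟩

theorem ZMod.cast_eq_cast_iff_eq_or_eq_add {m : ℕ} [NeZero m] (j j' : ZMod (2 * m)) :
    (cast j : ZMod m) = cast j' ↔ j' = j ∨ j' = j + m := by
  have hdvd : m ∣ 2 * m := dvd_mul_left m 2
  have hm : m < 2 * m := by have := NeZero.pos m; omega
  obtain ⟨d, rfl⟩ : ∃ d, j' = j + d := ⟨j' - j, by ring⟩
  have hval : (m : ZMod (2 * m)).val = m := ZMod.val_cast_of_lt hm
  rw [ZMod.cast_add hdvd, left_eq_add, add_eq_left, add_right_inj, ZMod.cast_eq_val,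
    ZMod.natCast_eq_zero_iff, ← ZMod.val_eq_zero, ← (ZMod.val_injective _).eq_iff, hval]
  constructor
  · rintro ⟨c, hc⟩
    have : c < 2 := by nlinarith [ZMod.val_lt d]
    interval_cases c <;> simp [hc]
  · rintro (h | h) <;> simp [h]

theorem ZMod.natCast_add_self_eq_zero (m : ℕ) : (m : ZMod (2 * m)) + m = 0 := by
  have h := ZMod.natCast_self (2 * m)
  push_cast at h
  linear_combination h

theorem ZMod.one_ne_natCast_of_two_le {m : ℕ} (hm : 2 ≤ m) : (1 : ZMod (2 * m)) ≠ m := by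
  intro h
  have := congrArg ZMod.val h
  rw [ZMod.val_one_eq_one_mod, Nat.mod_eq_of_lt (by omega), ZMod.val_cast_of_lt (by omega)] at this
  omega

namespace QuaternionGroup

/-- Indexes the maximal cyclic subgroups of `QuaternionGroup m`: `none` for `⟨a 1⟩`, and
`some (j mod m)` for `⟨xa j⟩ = ⟨xa (j + m)⟩`. -/
def maxCyclicIndex {m : ℕ} : QuaternionGroup m → Option (ZMod m)
  | a _ => none
  | xa j => some (ZMod.cast j)

variable {m : ℕ} [NeZero m]

theorem a_mem_zpowers_a_one (i : ZMod (2 * m)) : (a i : QuaternionGroup m) ∈ zpowers (a 1) :=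
  mem_powers_iff_mem_zpowers.mp ⟨i.val, by simp [a_one_pow]⟩

theorem xa_notMem_zpowers_a (i j : ZMod (2 * m)) : xa j ∉ zpowers (a i : QuaternionGroup m) := by
  intro h
  obtain ⟨k, hk⟩ := mem_powers_iff_mem_zpowers.mpr (zpowers_le.mpr (a_mem_zpowers_a_one i) h)
  simp [a_one_pow] at hk

theorem mem_zpowers_xa_iff {r : QuaternionGroup m} {j : ZMod (2 * m)} :
    r ∈ zpowers (xa j) ↔ r = 1 ∨ r = xa j ∨ r = a m ∨ r = xa (j + (m : ZMod (2 * m))) := by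
  rw [show j + (m : ZMod (2 * m)) = j - m by linear_combination ZMod.natCast_add_self_eq_zero m]
  simp only [mem_zpowers_iff_mem_range_orderOf, orderOf_xa, Finset.range_add_one,
    Finset.range_zero, insert_empty_eq, Finset.image_insert, pow_succ, pow_zero, one_mul,
    xa_mul_xa, add_sub_cancel_right, a_mul_xa, Finset.image_singleton, Finset.mem_insert,
    Finset.mem_singleton]
  tauto

theorem a_mem_zpowers_xa_iff {i j : ZMod (2 * m)} :
    a i ∈ zpowers (xa j) ↔ i = 0 ∨ i = m := by
  simp [mem_zpowers_xa_iff, ← a_zero]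

theorem xa_mem_zpowers_xa_iff {i j : ZMod (2 * m)} :
    xa i ∈ zpowers (xa j) ↔ i = j ∨ i = j + (m : ZMod (2 * m)) := by
  simp [mem_zpowers_xa_iff, ← a_zero]

theorem forall_inCommonCyclic_iff (hm : 2 ≤ m) {q : QuaternionGroup m} :
    (∀ r, InCommonCyclic q r) ↔ q = 1 ∨ q = a m := by
  constructor
  · intro h
    cases q with
    | a i =>
      obtain ⟨s, hq, hr⟩ := h (xa 0)
      cases s with
      | a l => exact absurd hr (xa_notMem_zpowers_a l 0)
      | xa l => simpa [← a_zero] using a_mem_zpowers_xa_iff.mp hq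
    | xa i =>
      obtain ⟨s, hq, hr⟩ := h (a 1)
      cases s with
      | a l => exact absurd hq (xa_notMem_zpowers_a l i)
      | xa l =>
        have : Fact (1 < 2 * m) := ⟨by omega⟩
        exact absurd (a_mem_zpowers_xa_iff.mp hr)
          (not_or.mpr ⟨one_ne_zero, ZMod.one_ne_natCast_of_two_le hm⟩)
  · rintro (rfl | rfl) r
    · exact ⟨r, one_mem _, mem_zpowers r⟩
    · cases r with
      | a i => exact ⟨a 1, a_mem_zpowers_a_one _, a_mem_zpowers_a_one _⟩
      | xa j => exact ⟨xa j, a_mem_zpowers_xa_iff.mpr (.inr rfl), mem_zpowers _⟩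

theorem not_inCommonCyclic_a_xa {i j : ZMod (2 * m)} (hi₁ : i ≠ 0) (hi₂ : i ≠ m) :
    ¬ InCommonCyclic (a i) (xa j) := by
  rintro ⟨s, hq, hr⟩
  cases s with
  | a l => exact xa_notMem_zpowers_a l j hr
  | xa l => exact (a_mem_zpowers_xa_iff.mp hq).elim hi₁ hi₂

theorem inCommonCyclic_xa_xa_iff {j j' : ZMod (2 * m)} :
    InCommonCyclic (xa j) (xa j') ↔ (ZMod.cast j : ZMod m) = ZMod.cast j' := by
  rw [ZMod.cast_eq_cast_iff_eq_or_eq_add]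
  constructor
  · rintro ⟨s, hq, hr⟩
    cases s with
    | a l => exact absurd hq (xa_notMem_zpowers_a l j)
    | xa l =>
      rcases xa_mem_zpowers_xa_iff.mp hq with rfl | rfl <;>
        rcases xa_mem_zpowers_xa_iff.mp hr with rfl | rfl <;>
        simp [add_assoc, ZMod.natCast_add_self_eq_zero]
  · rintro (rfl | rfl)
    · exact ⟨xa _, mem_zpowers _, mem_zpowers _⟩
    · exact ⟨xa j, mem_zpowers _, xa_mem_zpowers_xa_iff.mpr (.inr rfl)⟩

theorem inCommonCyclic_iff_maxCyclicIndex_eq {q r : QuaternionGroup m} (hq₁ : q ≠ 1)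
    (hq₂ : q ≠ a m) (hr₁ : r ≠ 1) (hr₂ : r ≠ a m) :
    InCommonCyclic q r ↔ q.maxCyclicIndex = r.maxCyclicIndex := by
  cases q with
  | a i =>
    cases r with
    | a i' => simpa [maxCyclicIndex] using ⟨a 1, a_mem_zpowers_a_one i, a_mem_zpowers_a_one i'⟩
    | xa j' =>
      simpa [maxCyclicIndex] using
        not_inCommonCyclic_a_xa (mt (congrArg a) (by simpa using hq₁)) (mt (congrArg a) hq₂)
  | xa j =>
    cases r with
    | a i' =>
      simpa [maxCyclicIndex] using mt InCommonCyclic.symm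
        (not_inCommonCyclic_a_xa (mt (congrArg a) (by simpa using hr₁)) (mt (congrArg a) hr₂))
    | xa j' => simpa [maxCyclicIndex] using inCommonCyclic_xa_xa_iff

end QuaternionGroup

open QuaternionGroup in
theorem dominationNumber_properEnhancedPowerGraph_prod_quaternionGroup {A : Type*} [Group A]
    [IsCyclic A] [Finite A] {m : ℕ} [NeZero m] (hm : 2 ≤ m) (hA : (Nat.card A).Coprime (4 * m)) :
    (properEnhancedPowerGraph (A × QuaternionGroup m)).dominationNumber = m + 1 := by
  have hAB : (Nat.card A).Coprime (Nat.card (QuaternionGroup m)) := by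
    rwa [Nat.card_eq_fintype_card (α := QuaternionGroup m), QuaternionGroup.card]
  have hcentral (v : A × QuaternionGroup m) :
      v ∈ (enhancedPowerGraph _).domVerts ↔ v.2 = 1 ∨ v.2 = a m := by
    rw [mem_domVerts_enhancedPowerGraph_prod_iff hAB, forall_inCommonCyclic_iff hm]
  have : Fact (1 < 2 * m) := ⟨by omega⟩
  rw [dominationNumber_eq_of_adj_iff _ (fun v => v.1.2.maxCyclicIndex), Finite.card_option,
    Nat.card_zmod]
  · rintro (_ | c)
    · refine ⟨⟨(1, a 1), ?_⟩, rfl⟩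
      simpa [hcentral, ← a_zero] using ZMod.one_ne_natCast_of_two_le hm
    · refine ⟨⟨(1, xa c.val), by simp [hcentral, ← a_zero]⟩, ?_⟩
      simp only [maxCyclicIndex, ZMod.cast_natCast (dvd_mul_left m 2), ZMod.natCast_zmod_val]
  · rintro ⟨u, hu⟩ ⟨v, hv⟩
    simp only [Set.mem_compl_iff, hcentral, not_or] at hu hv
    rw [Ne, Subtype.mk.injEq, ← inCommonCyclic_iff_maxCyclicIndex_eq hu.1 hu.2 hv.1 hv.2,
      ← inCommonCyclic_prod_iff hAB]
    exact enhancedPowerGraph_adj_iff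

/-- For `k ≥ 3` and `n` with `gcd(n, 2) = 1`,
`γ(G_E**(ℤ_n × Q_{2^k})) = 2^{k-2} + 1`. -/
theorem stmt_9 (k : ℕ) (hk : 3 ≤ k) (n : ℕ) [NeZero n] (hn : Nat.Coprime n 2) :
    (properEnhancedPowerGraph
        (Multiplicative (ZMod n) × QuaternionGroup (2 ^ (k - 2)))).dominationNumber =
      2 ^ (k - 2) + 1 := by
  have hcard : 4 * 2 ^ (k - 2) = 2 ^ k := by
    rw [show (4 : ℕ) = 2 ^ 2 by rfl, ← pow_add, Nat.add_sub_cancel' (by omega)]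
  refine dominationNumber_properEnhancedPowerGraph_prod_quaternionGroup
    (Nat.le_self_pow (by omega) 2) ?_
  rw [hcard, Nat.card_eq_fintype_card, Fintype.card_multiplicative, ZMod.card]
  exact hn.pow_right k
end

section
/- Let k ≥ 3 and let n be a positive integer with gcd(n, 2) = 1. Then every total dominating set of the proper enhanced power graph of Z_n × Q_{2^k} has at least 2^{k-2} + 1 elements, i.e., γ^strong(G_E**(Z_n × Q_{2^k})) ≥ 2^{k-2} + 1. -/
open SimpleGraph

/-!
Let `A` be cyclic of order prime to `4m`. A vertex `(c, xa i)` of `G_E**(A × Q_{4m})` only meets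
cyclic subgroups whose `Q`-part is `⟨xa i⟩ = {1, a m, xa i, xa (i + m)}`, and the vertices `(d, 1)`,
`(d, a m)` are dominating (they lie in `⟨(g, q)⟩` for a generator `g` of `A` by the Chinese
remainder theorem). So each of the `m` subgroups `⟨xa i⟩` needs its own element of a total
dominating set, and `(c, a 1)` needs one more, whose `Q`-part is a rotation.
-/

open Subgroup

lemma mem_zpowers_mk_of_coprime {A B : Type*} [Group A] [Group B] [Finite A] [Finite B]
    {g : A} {h : B} (hco : (orderOf g).Coprime (orderOf h)) {x : A × B}
    (hx₁ : x.1 ∈ zpowers g) (hx₂ : x.2 ∈ zpowers h) : x ∈ zpowers (g, h) := by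
  obtain ⟨s, hs⟩ := (isOfFinOrder_of_finite g).mem_powers_iff_mem_zpowers.mpr hx₁
  obtain ⟨t, ht⟩ := (isOfFinOrder_of_finite h).mem_powers_iff_mem_zpowers.mpr hx₂
  obtain ⟨r, hrs, hrt⟩ := Nat.chineseRemainder hco s t
  refine mem_zpowers_iff.mpr ⟨r, ?_⟩
  rw [zpow_natCast, ← Prod.mk.eta (p := x), ← hs, ← ht, Prod.pow_mk, pow_eq_pow_iff_modEq.mpr hrs,
    pow_eq_pow_iff_modEq.mpr hrt]

lemma snd_mem_zpowers_snd {A B : Type*} [Group A] [Group B] {w x : A × B}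
    (h : x ∈ zpowers w) : x.2 ∈ zpowers w.2 := by
  obtain ⟨z, rfl⟩ := mem_zpowers_iff.mp h
  exact ⟨z, rfl⟩

namespace enhancedPowerGraph

lemma one_mem_domVerts (G : Type*) [Group G] : (1 : G) ∈ (enhancedPowerGraph G).domVerts :=
  fun q hq => ⟨hq.symm, q, one_mem _, mem_zpowers q⟩

lemma mk_mem_domVerts_prod {A B : Type*} [Group A] [Group B] [Finite A] [Finite B] [IsCyclic A]
    (hcop : (Nat.card A).Coprime (Nat.card B)) (c : A) {t : B}
    (ht : t ∈ (enhancedPowerGraph B).domVerts) :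
    (c, t) ∈ (enhancedPowerGraph (A × B)).domVerts := by
  obtain ⟨g, hg⟩ := IsCyclic.exists_generator (α := A)
  rintro ⟨d, q⟩ hne
  obtain ⟨w, htw, hqw⟩ : ∃ w : B, t ∈ zpowers w ∧ q ∈ zpowers w := by
    by_cases hq : q = t
    · exact ⟨t, mem_zpowers t, hq ▸ mem_zpowers t⟩
    · exact (ht q hq).2
  have hco : (orderOf g).Coprime (orderOf w) :=
    hcop.of_dvd (orderOf_dvd_natCard g) (orderOf_dvd_natCard w)
  exact ⟨hne.symm, (g, w), mem_zpowers_mk_of_coprime hco (hg c) htw,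
    mem_zpowers_mk_of_coprime hco (hg d) hqw⟩

lemma exists_zpowers_snd_of_adj {A B : Type*} [Group A] [Group B] {x y : A × B}
    (h : (enhancedPowerGraph (A × B)).Adj x y) :
    ∃ w : B, x.2 ∈ zpowers w ∧ y.2 ∈ zpowers w := by
  obtain ⟨-, w, hx, hy⟩ := h
  exact ⟨w.2, snd_mem_zpowers_snd hx, snd_mem_zpowers_snd hy⟩

end enhancedPowerGraph

namespace QuaternionGroup

variable {m : ℕ}

lemma a_pow (i : ZMod (2 * m)) (t : ℕ) : (a i : QuaternionGroup m) ^ t = a ((t : ZMod (2 * m)) * i) := by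
  induction t with
  | zero => rw [pow_zero, Nat.cast_zero, zero_mul, a_zero]
  | succ t ih => rw [pow_succ, ih, a_mul_a, Nat.cast_succ, add_mul, one_mul]

lemma exists_eq_a_of_mem_zpowers_a [NeZero m] {i : ZMod (2 * m)} {u : QuaternionGroup m}
    (hu : u ∈ zpowers (a i)) : ∃ j, u = a j := by
  obtain ⟨t, rfl⟩ := (isOfFinOrder_of_finite (a i)).mem_powers_iff_mem_zpowers.mpr hu
  exact ⟨t * i, a_pow i t⟩

lemma mem_zpowers_xa [NeZero m] {i : ZMod (2 * m)} {u : QuaternionGroup m}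
    (hu : u ∈ zpowers (xa i)) : u = 1 ∨ u = a m ∨ u = xa i ∨ u = xa (i + (m : ZMod (2 * m))) := by
  obtain ⟨t, rfl⟩ :=
    (Submonoid.mem_powers_iff _ _).mp ((isOfFinOrder_of_finite _).mem_powers_iff_mem_zpowers.mpr hu)
  rw [← pow_mod_orderOf, orderOf_xa]
  have : t % 4 < 4 := Nat.mod_lt t (by norm_num)
  interval_cases t % 4
  · exact .inl (pow_zero _)
  · exact .inr (.inr (.inl (pow_one _)))
  · exact .inr (.inl (xa_sq i))
  · exact .inr (.inr (.inr (by rw [pow_succ', xa_sq, xa_mul_a])))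

lemma zpowers_eq_zpowers_xa [NeZero m] {i : ZMod (2 * m)} {w : QuaternionGroup m}
    (hw : xa i ∈ zpowers w) : zpowers w = zpowers (xa i) := by
  cases w with
  | a j =>
    obtain ⟨_, h⟩ := exists_eq_a_of_mem_zpowers_a hw
    cases h
  | xa j =>
    refine (eq_of_le_of_card_ge (zpowers_le.mpr hw) ?_).symm
    rw [Nat.card_zpowers, Nat.card_zpowers, orderOf_xa, orderOf_xa]

lemma a_one_notMem_zpowers_of_xa_mem [NeZero m] (hm : 2 ≤ m) {i : ZMod (2 * m)}
    {w : QuaternionGroup m} (hw : xa i ∈ zpowers w) : a 1 ∉ zpowers w := by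
  have hval : ∀ k : ℕ, k < 2 * m → (a 1 : QuaternionGroup m) = a k → k = 1 := fun k hk h => by
    simpa [ZMod.val_natCast_of_lt hk, ZMod.val_one_eq_one_mod, Nat.mod_eq_of_lt (by omega : 1 < 2 * m)]
      using congrArg ZMod.val (a.inj h).symm
  intro h
  rw [zpowers_eq_zpowers_xa hw] at h
  rcases mem_zpowers_xa h with h | h | h | h
  · have := hval 0 (by omega) (by rw [h, one_def, Nat.cast_zero])
    omega
  · have := hval m (by omega) h
    omega
  · cases h
  · cases h

lemma a_n_mem_domVerts [NeZero m] :
    a (m : ZMod (2 * m)) ∈ (enhancedPowerGraph (QuaternionGroup m)).domVerts := by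
  intro q hq
  refine ⟨hq.symm, ?_⟩
  cases q with
  | a j =>
    refine ⟨a 1, ?_, ?_⟩
    · exact mem_zpowers_iff.mpr ⟨m, by rw [zpow_natCast, a_one_pow]⟩
    · exact mem_zpowers_iff.mpr ⟨j.val, by rw [zpow_natCast, a_one_pow, ZMod.natCast_zmod_val]⟩
  | xa j => exact ⟨xa j, ⟨2, by simp [xa_sq]⟩, mem_zpowers _⟩

/-- `xa i` and `xa (i + m)` generate the same cyclic subgroup of order `4`; this labels that
subgroup by `i mod m`, and sends every rotation to `none`. -/
def xaPairIndex : QuaternionGroup m → Option (ZMod m)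
  | a _ => none
  | xa i => some i.cast

lemma xaPairIndex_xa_add (i : ZMod (2 * m)) :
    xaPairIndex (xa (i + (m : ZMod (2 * m))) : QuaternionGroup m) = xaPairIndex (xa i) := by
  simp [xaPairIndex, ZMod.cast_add (dvd_mul_left m 2), ZMod.cast_natCast (dvd_mul_left m 2)]

lemma xaPairIndex_xa_val [NeZero m] (r : ZMod m) :
    xaPairIndex (xa (r.val : ZMod (2 * m)) : QuaternionGroup m) = some r := by
  simp only [xaPairIndex, ZMod.cast_natCast (dvd_mul_left m 2), ZMod.natCast_zmod_val]

end QuaternionGroup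

open QuaternionGroup

section
variable {A : Type*} [Group A] {m : ℕ} [NeZero m]

lemma not_adj_mk_xa_mk_a_one (hm : 2 ≤ m) (c d : A) (i : ZMod (2 * m)) :
    ¬ (enhancedPowerGraph (A × QuaternionGroup m)).Adj (c, xa i) (d, a 1) := fun h => by
  obtain ⟨w, hx, ha⟩ := enhancedPowerGraph.exists_zpowers_snd_of_adj h
  exact a_one_notMem_zpowers_of_xa_mem hm hx ha

lemma xaPairIndex_eq_none_of_adj_a_one (hm : 2 ≤ m) {c : A} {u : A × QuaternionGroup m}
    (h : (enhancedPowerGraph (A × QuaternionGroup m)).Adj (c, a 1) u) : xaPairIndex u.2 = none := by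
  obtain ⟨w, ha, hu⟩ := enhancedPowerGraph.exists_zpowers_snd_of_adj h
  cases w with
  | a j =>
    obtain ⟨s, hs⟩ := exists_eq_a_of_mem_zpowers_a hu
    simp [hs, xaPairIndex]
  | xa j => exact absurd ha (a_one_notMem_zpowers_of_xa_mem hm (mem_zpowers _))

variable [Finite A] [IsCyclic A]

lemma xaPairIndex_eq_of_adj_xa (hcop : (Nat.card A).Coprime (Nat.card (QuaternionGroup m)))
    {c : A} {i : ZMod (2 * m)} {u : A × QuaternionGroup m}
    (hu : u ∉ (enhancedPowerGraph (A × QuaternionGroup m)).domVerts)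
    (h : (enhancedPowerGraph (A × QuaternionGroup m)).Adj (c, xa i) u) :
    xaPairIndex u.2 = xaPairIndex (xa i) := by
  have hdom : ∀ t ∈ (enhancedPowerGraph (QuaternionGroup m)).domVerts, u.2 ≠ t :=
    fun t ht hut => hu <| by
      rw [← Prod.mk.eta (p := u), hut]
      exact enhancedPowerGraph.mk_mem_domVerts_prod hcop u.1 ht
  obtain ⟨w, hx, hw⟩ := enhancedPowerGraph.exists_zpowers_snd_of_adj h
  rw [zpowers_eq_zpowers_xa hx] at hw
  rcases mem_zpowers_xa hw with hu₂ | hu₂ | hu₂ | hu₂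
  · exact absurd hu₂ (hdom 1 (enhancedPowerGraph.one_mem_domVerts _))
  · exact absurd hu₂ (hdom _ a_n_mem_domVerts)
  · rw [hu₂]
  · rw [hu₂, xaPairIndex_xa_add]

theorem le_ncard_of_isTotalDominatingSet (hm : 2 ≤ m)
    (hcop : (Nat.card A).Coprime (Nat.card (QuaternionGroup m)))
    {D : Set ((enhancedPowerGraph (A × QuaternionGroup m)).domVertsᶜ : Set _)}
    (hD : (properEnhancedPowerGraph (A × QuaternionGroup m)).IsTotalDominatingSet D) :
    m + 1 ≤ D.ncard := by
  set f := fun u : ((enhancedPowerGraph (A × QuaternionGroup m)).domVertsᶜ : Set _) =>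
    xaPairIndex (u : A × QuaternionGroup m).2
  have hsurj : f '' D = Set.univ := by
    refine Set.eq_univ_of_forall fun r => ?_
    cases r with
    | none =>
      have hv : ((1, a 1) : A × QuaternionGroup m) ∉ (enhancedPowerGraph _).domVerts :=
        fun h => not_adj_mk_xa_mk_a_one hm 1 1 0 (h (1, xa 0) (by simp)).symm
      obtain ⟨u, huD, hu⟩ := hD ⟨_, hv⟩
      exact ⟨u, huD, xaPairIndex_eq_none_of_adj_a_one hm hu⟩
    | some r =>
      have hv : ((1, xa (r.val : ZMod (2 * m))) : A × QuaternionGroup m) ∉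
          (enhancedPowerGraph _).domVerts :=
        fun h => not_adj_mk_xa_mk_a_one hm 1 1 _ (h (1, a 1) (by simp))
      obtain ⟨u, huD, hu⟩ := hD ⟨_, hv⟩
      exact ⟨u, huD, (xaPairIndex_eq_of_adj_xa hcop u.2 hu).trans (xaPairIndex_xa_val r)⟩
  calc m + 1 = (Set.univ : Set (Option (ZMod m))).ncard := by
        rw [Set.ncard_univ, Nat.card_eq_fintype_card, Fintype.card_option, ZMod.card]
    _ = (f '' D).ncard := by rw [hsurj]
    _ ≤ D.ncard := Set.ncard_image_le (Set.toFinite D)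

end

/-- For `k ≥ 3` and `n` with `gcd(n, 2) = 1`, every total dominating set of
`G_E**(ℤ_n × Q_{2^k})` has at least `2^{k-2} + 1` elements. -/
theorem stmt_15 (k : ℕ) (hk : 3 ≤ k) (n : ℕ) [NeZero n] (hn : Nat.Coprime n 2) :
    ∀ D : Set ((enhancedPowerGraph
        (Multiplicative (ZMod n) × QuaternionGroup (2 ^ (k - 2)))).domVertsᶜ :
          Set (Multiplicative (ZMod n) × QuaternionGroup (2 ^ (k - 2)))),
      (properEnhancedPowerGraph
          (Multiplicative (ZMod n) × QuaternionGroup (2 ^ (k - 2)))).IsTotalDominatingSet D →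
        2 ^ (k - 2) + 1 ≤ D.ncard := by
  intro D hD
  have hm : 2 ≤ 2 ^ (k - 2) := Nat.le_self_pow (by omega) 2
  have hcop : (Nat.card (Multiplicative (ZMod n))).Coprime
      (Nat.card (QuaternionGroup (2 ^ (k - 2)))) := by
    rw [Nat.card_eq_fintype_card, Nat.card_eq_fintype_card, QuaternionGroup.card,
      Fintype.card_multiplicative, ZMod.card, show 4 = 2 ^ 2 by rfl, ← pow_add]
    exact hn.pow_right _
  exact le_ncard_of_isTotalDominatingSet hm hcop hD
end
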